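/- In an alternating base tree, for any γ̄(t)-extendable pair (s,t) with out(t) = {y_t, z_t}, z_t ∈ V(T_t), and ρ = ρ(out(t)): the length of the tree path R from t to z_t in T satisfies |R| ≤ |Z| for every ρ-extendable path Z from t to z_t, and |R| ≤ |Y| for every ρ-extendable path Y from s to y_t. -/

import Mathlib

open Classical

namespace AltMatch

variable {V : Type*}

/-- `M` is a matching of `G`: a set of edges of `G` that pairwise share no vertex. -/
def IsMatching (G : SimpleGraph V) (M : Set (Sym2 V)) : Prop :=
  M ⊆ G.edgeSet ∧ ∀ e₁ ∈ M, ∀ e₂ ∈ M, e₁ ≠ e₂ → ∀ v : V, v ∈ e₁ → v ∉ e₂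

/-- `v` is unmatched by `M`. -/
def Unmatched (M : Set (Sym2 V)) (v : V) : Prop := ∀ e ∈ M, v ∉ e

/-- A walk is alternating (starting with a non-matching edge):
its `i`-th edge is in `M` iff `i` is odd. -/
def Alt {G : SimpleGraph V} {u v : V} (M : Set (Sym2 V)) (w : G.Walk u v) : Prop :=
  ∀ (i : ℕ) (h : i < w.edges.length), (w.edges.get ⟨i, h⟩ ∈ M ↔ i % 2 = 1)

/-- An alternating path (w.r.t. `M`) from `u` to `v`. -/
def IsAltPath (G : SimpleGraph V) (M : Set (Sym2 V)) {u v : V} (w : G.Walk u v) : Prop :=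
  w.IsPath ∧ Alt M w

/-- Parity of a natural number as a `Bool` (`true` = odd). -/
def parityOf (n : ℕ) : Bool := decide (n % 2 = 1)

/-- `altDist G M θ f v` : minimum length of an alternating path from `f` to `v`
of parity `θ` (`true` = odd), or `⊤` if none exists. -/
noncomputable def altDist (G : SimpleGraph V) (M : Set (Sym2 V)) (θ : Bool) (f v : V) : ℕ∞ :=
  sInf {n : ℕ∞ | ∃ w : G.Walk f v, IsAltPath G M w ∧ parityOf w.length = θ ∧ (w.length : ℕ∞) = n}

/-- `gam G M f v` : the parity of the shortest alternating path from `f` to `v`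
(`true` = odd). -/
noncomputable def gam (G : SimpleGraph V) (M : Set (Sym2 V)) (f v : V) : Bool :=
  if altDist G M true f v < altDist G M false f v then true else false

/-- `w` is a shortest `θ`-alternating path from `f` to `v`. -/
def IsShortestAlt (G : SimpleGraph V) (M : Set (Sym2 V)) (θ : Bool) (f v : V)
    (w : G.Walk f v) : Prop :=
  IsAltPath G M w ∧ parityOf w.length = θ ∧ (w.length : ℕ∞) = altDist G M θ f v

/-- An `M`-augmenting path: an alternating path of odd length between two distinct
unmatched vertices. -/
def IsAugPath (G : SimpleGraph V) (M : Set (Sym2 V)) {a b : V} (w : G.Walk a b) : Prop :=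
  a ≠ b ∧ Unmatched M a ∧ Unmatched M b ∧ IsAltPath G M w ∧ w.length % 2 = 1

/-- `μ(G)` : the maximum size of a matching of `G`. -/
noncomputable def matchingNumber (G : SimpleGraph V) : ℕ :=
  sSup {n : ℕ | ∃ M : Set (Sym2 V), IsMatching G M ∧ M.Finite ∧ M.ncard = n}

/-- An alternating base tree for `G`, `M`, `f`: a spanning tree of `G` rooted at `f`
(encoded by its parent function) such that for every `v ≠ f` with parent `u`,
`dist^{γ(v)}(v) = dist^{γ̄(v)}(u) + 1`. -/
structure AltBaseTree (G : SimpleGraph V) (M : Set (Sym2 V)) (f : V) where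
  parent : V → V
  parent_root : parent f = f
  parent_adj : ∀ v, v ≠ f → G.Adj (parent v) v
  parent_reaches : ∀ v, ∃ n : ℕ, parent^[n] v = f
  dist_eq : ∀ v, v ≠ f →
    altDist G M (gam G M f v) f v = altDist G M (!gam G M f v) f (parent v) + 1

namespace AltBaseTree

variable {G : SimpleGraph V} {M : Set (Sym2 V)} {f : V}

/-- `v` belongs to the subtree `T_t` of `T` rooted at `t` (`t` is an ancestor-or-self
of `v`). -/
def InSubtree (T : AltBaseTree G M f) (t v : V) : Prop := ∃ n : ℕ, T.parent^[n] v = t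

/-- `e` is an edge of the tree `T`. -/
def IsTreeEdge (T : AltBaseTree G M f) (e : Sym2 V) : Prop :=
  ∃ v, v ≠ f ∧ e = s(T.parent v, v)

/-- `e` is an outgoing edge of the subtree `T_t`: a non-tree edge of `G` with exactly
one endpoint inside `T_t`. -/
def IsOutgoing (T : AltBaseTree G M f) (t : V) (e : Sym2 V) : Prop :=
  e ∈ G.edgeSet ∧ ¬ T.IsTreeEdge e ∧
    ∃ x y : V, e = s(x, y) ∧ ¬ T.InSubtree t x ∧ T.InSubtree t y

end AltBaseTree

/-- Matching-parity of an edge: `true` (odd) iff `e ∈ M`. -/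
noncomputable def rho (M : Set (Sym2 V)) (e : Sym2 V) : Bool :=
  if e ∈ M then true else false

/-- Sum-level of an edge `e = {x,y}` : `dist^{ρ(e)}(x) + dist^{ρ(e)}(y)`. -/
noncomputable def levelSum (G : SimpleGraph V) (M : Set (Sym2 V)) (f : V) (e : Sym2 V) : ℕ∞ :=
  Sym2.lift ⟨fun x y => altDist G M (rho M e) f x + altDist G M (rho M e) f y,
    fun x y => add_comm _ _⟩ e

/-- Max-level of an edge `e = {x,y}` : `max (dist^{ρ(e)}(x)) (dist^{ρ(e)}(y))`. -/
noncomputable def levelMax (G : SimpleGraph V) (M : Set (Sym2 V)) (f : V) (e : Sym2 V) : ℕ∞ :=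
  Sym2.lift ⟨fun x y => max (altDist G M (rho M e) f x) (altDist G M (rho M e) f y),
    fun x y => max_comm _ _⟩ e

/-- The level of an edge: `(0,0)` for tree edges, and the lexicographic pair
`(sum-level, max-level)` otherwise. -/
noncomputable def level {G : SimpleGraph V} {M : Set (Sym2 V)} {f : V}
    (T : AltBaseTree G M f) (e : Sym2 V) : Lex (ℕ∞ × ℕ∞) :=
  if T.IsTreeEdge e then toLex ((0 : ℕ∞), (0 : ℕ∞))
  else toLex (levelSum G M f e, levelMax G M f e)

/-- The level of a walk: the maximum level of its edges. -/
noncomputable def walkLevel {G : SimpleGraph V} {M : Set (Sym2 V)} {f : V}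
    (T : AltBaseTree G M f) {a b : V} (w : G.Walk a b) : Lex (ℕ∞ × ℕ∞) :=
  (w.edges.map (level T)).foldr max (toLex ((0 : ℕ∞), (0 : ℕ∞)))

/-- `out` assigns to each vertex `v` (whose subtree has an outgoing edge) a
minimum-level outgoing edge of `T_v`. -/
def IsMOE {G : SimpleGraph V} {M : Set (Sym2 V)} {f : V}
    (T : AltBaseTree G M f) (out : V → Sym2 V) : Prop :=
  ∀ v, (∃ e, T.IsOutgoing v e) →
    T.IsOutgoing v (out v) ∧ ∀ e, T.IsOutgoing v e → level T (out v) ≤ level T e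

/-- Canonical tie-breaking rule for MOEs: if a minimum-level outgoing edge of `T_v`
incident to `v` exists, then `out v` is incident to `v`. -/
def CanonicalTie {G : SimpleGraph V} {M : Set (Sym2 V)} {f : V}
    (T : AltBaseTree G M f) (out : V → Sym2 V) : Prop :=
  ∀ v e, T.IsOutgoing v e → (∀ e', T.IsOutgoing v e' → level T e ≤ level T e') →
    v ∈ e → v ∈ out v

/-- Level of `out v`, with the virtual value `(∞,∞)` when `T_v` has no outgoing edge. -/
noncomputable def outLevel {G : SimpleGraph V} {M : Set (Sym2 V)} {f : V}
    (T : AltBaseTree G M f) (out : V → Sym2 V) (v : V) : Lex (ℕ∞ × ℕ∞) :=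
  if ∃ e, T.IsOutgoing v e then level T (out v) else toLex ((⊤ : ℕ∞), (⊤ : ℕ∞))

/-- `P` is a `θ`-extension of the pair `(s,t)`: a shortest `θ`-alternating path from
`f` to `t` passing through `s` with `level(P) < level(out(s))`. -/
def IsExtension {G : SimpleGraph V} {M : Set (Sym2 V)} {f : V}
    (T : AltBaseTree G M f) (out : V → Sym2 V) (θ : Bool) (s : V) {t : V}
    (P : G.Walk f t) : Prop :=
  IsShortestAlt G M θ f t P ∧ s ∈ P.support ∧ walkLevel T P < outLevel T out s

/-- `Q` is a `θ`-extendable path from `s` to `t`: the suffix `P[s,t]` of some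
`θ`-extension `P` of `(s,t)`. -/
def IsExtendablePath [DecidableEq V] {G : SimpleGraph V} {M : Set (Sym2 V)} {f : V}
    (T : AltBaseTree G M f) (out : V → Sym2 V) (θ : Bool) {s t : V}
    (Q : G.Walk s t) : Prop :=
  ∃ (P : G.Walk f t) (hs : s ∈ P.support), IsExtension T out θ s P ∧ P.dropUntil s hs = Q

end AltMatch

/-!
Write `dist(v)` for `dist^{γ(v)}(v)`. Along the tree `dist` grows by at least one per edge, so
`|R| + dist(t) ≤ dist(z_t)`, and it suffices to reach `z_t` by an alternating path of length at
most `dist(t) + |Z|`, resp. `dist(t) + |Y|`.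

An extension `P` of `(a, ·)` uses no outgoing edge of `T_a`, so it enters `T_a` through the tree
edge into `a` and stays inside afterwards. Since `T_a \ {a}` lies farther from `f` than `a`, a
shortest alternating path to `a` can then replace the part of `P` before `a`, provided it has the
right parity; parity is forced because the tree edge into an odd vertex is unmatched, and the
matched edge at an even vertex points towards `f`. Hence `P` reaches `a` after exactly `dist(a)`
steps. For `Z` this gives the path `P` of length `dist(t) + |Z|` to `z_t`. For `Y`, the path `P`
followed by `out(t)` reaches `z_t` after at most `dist(s) + |Y| + 1 ≤ dist(t) + |Y|` steps, since
`s` is a proper ancestor of `t`.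
-/

namespace AltMatch

open SimpleGraph

variable {V : Type*} {G : SimpleGraph V} {M : Set (Sym2 V)} {f : V}

lemma parityOf_eq_true_iff {n : ℕ} : parityOf n = true ↔ n % 2 = 1 := by
  simp [parityOf]

lemma parityOf_eq_false_iff {n : ℕ} : parityOf n = false ↔ n % 2 = 0 := by
  simp [parityOf]

lemma parityOf_eq_parityOf_iff {m n : ℕ} : parityOf m = parityOf n ↔ m % 2 = n % 2 := by
  simp only [parityOf, decide_eq_decide]
  omega

lemma rho_eq_parityOf_iff {e : Sym2 V} {n : ℕ} :
    rho M e = parityOf n ↔ (e ∈ M ↔ n % 2 = 1) := by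
  unfold rho parityOf
  split_ifs with he <;> simp [he, eq_comm]

section Alternation

def AltFrom (M : Set (Sym2 V)) (k : ℕ) {u v : V} (w : G.Walk u v) : Prop :=
  ∀ (i : ℕ) (h : i < w.edges.length), w.edges[i] ∈ M ↔ (k + i) % 2 = 1

variable {u v x : V} {k : ℕ}

lemma alt_iff_altFrom_zero {w : G.Walk u v} : Alt M w ↔ AltFrom M 0 w := by
  simp [Alt, AltFrom]

lemma altFrom_append {p : G.Walk u v} {q : G.Walk v x} :
    AltFrom M k (p.append q) ↔ AltFrom M k p ∧ AltFrom M (k + p.length) q := by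
  simp only [AltFrom, Walk.edges_append, List.length_append, ← Walk.length_edges]
  refine ⟨fun h => ⟨fun i hi => ?_, fun i hi => ?_⟩, fun ⟨hp, hq⟩ i hi => ?_⟩
  · simpa [List.getElem_append_left hi] using h i (by omega)
  · simpa [List.getElem_append_right, Nat.add_assoc] using h (p.edges.length + i) (by omega)
  · rcases lt_or_ge i p.edges.length with hlt | hge
    · simpa [List.getElem_append_left hlt] using hp i hlt
    · have := hq (i - p.edges.length) (by omega)
      rw [List.getElem_append_right hge, this]
      omega

lemma altFrom_cons_nil (h : G.Adj u v) :
    AltFrom M k (Walk.cons h Walk.nil) ↔ (s(u, v) ∈ M ↔ k % 2 = 1) := by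
  simp [AltFrom]

lemma altFrom_congr {l : ℕ} (hkl : k % 2 = l % 2) {w : G.Walk u v} :
    AltFrom M k w ↔ AltFrom M l w :=
  forall₂_congr fun i _ => by rw [show (k + i) % 2 = (l + i) % 2 by omega]

lemma alt_append_iff {p : G.Walk u v} {q : G.Walk v x} :
    Alt M (p.append q) ↔ Alt M p ∧ AltFrom M p.length q := by
  simp [alt_iff_altFrom_zero, altFrom_append]

lemma alt_concat_iff {p : G.Walk u v} (h : G.Adj v x) :
    Alt M (p.concat h) ↔ Alt M p ∧ (s(v, x) ∈ M ↔ p.length % 2 = 1) := by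
  rw [Walk.concat_eq_append, alt_append_iff, altFrom_cons_nil]

end Alternation

section Walks

variable {u v a : V}

lemma exists_eq_concat_of_ne (w : G.Walk u v) (h : u ≠ v) :
    ∃ (c : V) (p : G.Walk u c) (hc : G.Adj c v), w = p.concat hc :=
  ⟨_, _, _, (Walk.concat_dropLast (Walk.adj_penultimate (Walk.not_nil_of_ne h))).symm⟩

lemma isPath_append_of_support_inter {p : G.Walk u a} {q : G.Walk a v} (hp : p.IsPath)
    (hq : q.IsPath) (h : ∀ x ∈ p.support, x ∈ q.support → x = a) : (p.append q).IsPath := by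
  have hq' := hq.support_nodup
  rw [← Walk.cons_tail_support, List.nodup_cons] at hq'
  rw [Walk.isPath_def, Walk.support_append]
  refine List.nodup_append'.mpr ⟨hp.support_nodup, hq'.2, fun x hxp hxq => ?_⟩
  obtain rfl := h x hxp (List.mem_of_mem_tail hxq)
  exact hq'.1 hxq

variable [DecidableEq V]

lemma length_takeUntil_add_length_dropUntil (w : G.Walk u v) (h : a ∈ w.support) :
    (w.takeUntil a h).length + (w.dropUntil a h).length = w.length := by
  rw [← Walk.length_append, Walk.take_spec]

lemma Alt.takeUntil_dropUntil {w : G.Walk u v} (hw : Alt M w) (h : a ∈ w.support) :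
    Alt M (w.takeUntil a h) ∧ AltFrom M (w.takeUntil a h).length (w.dropUntil a h) := by
  rw [← alt_append_iff, Walk.take_spec]
  exact hw

end Walks

lemma IsMatching.eq_of_mem {e₁ e₂ : Sym2 V} (hM : IsMatching G M) (h₁ : e₁ ∈ M) (h₂ : e₂ ∈ M)
    {v : V} (hv₁ : v ∈ e₁) (hv₂ : v ∈ e₂) : e₁ = e₂ := by
  by_contra hne
  exact hM.2 e₁ h₁ e₂ h₂ hne v hv₁ hv₂

section Distances

variable {a v x : V}

lemma altDist_le_length {w : G.Walk f v} (hw : IsAltPath G M w) :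
    altDist G M (parityOf w.length) f v ≤ w.length :=
  sInf_le ⟨w, hw, rfl, rfl⟩

lemma exists_isShortestAlt {θ : Bool} (h : altDist G M θ f v ≠ ⊤) :
    ∃ w : G.Walk f v, IsShortestAlt G M θ f v w := by
  have hne : {n : ℕ∞ | ∃ w : G.Walk f v,
      IsAltPath G M w ∧ parityOf w.length = θ ∧ (w.length : ℕ∞) = n}.Nonempty := by
    by_contra hemp
    exact h (by rw [altDist, Set.not_nonempty_iff_eq_empty.mp hemp, sInf_empty])
  obtain ⟨w, hw, hpar, hlen⟩ := csInf_mem hne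
  exact ⟨w, hw, hpar, hlen⟩

/-- `dist^{γ(v)}(v)`: the length of a shortest alternating path from `f` to `v`. -/
noncomputable def minAltDist (G : SimpleGraph V) (M : Set (Sym2 V)) (f v : V) : ℕ∞ :=
  altDist G M (gam G M f v) f v

lemma minAltDist_le_altDist (θ : Bool) : minAltDist G M f v ≤ altDist G M θ f v := by
  unfold minAltDist gam
  split_ifs with h <;> cases θ
  exacts [h.le, le_rfl, le_rfl, not_lt.mp h]

lemma minAltDist_le_length {w : G.Walk f v} (hw : IsAltPath G M w) :
    minAltDist G M f v ≤ w.length :=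
  (minAltDist_le_altDist _).trans (altDist_le_length hw)

lemma minAltDist_ne_top {w : G.Walk f v} (hw : IsAltPath G M w) : minAltDist G M f v ≠ ⊤ :=
  ne_top_of_le_ne_top (ENat.natCast_ne_top _) (minAltDist_le_length hw)

lemma minAltDist_le_length_takeUntil [DecidableEq V] {w : G.Walk f v} (hw : IsAltPath G M w)
    (h : a ∈ w.support) : minAltDist G M f a ≤ (w.takeUntil a h).length :=
  minAltDist_le_length ⟨hw.1.takeUntil h, (hw.2.takeUntil_dropUntil h).1⟩

lemma minAltDist_le_length_add_one [DecidableEq V] {w : G.Walk f v} (hw : IsAltPath G M w)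
    (hvx : G.Adj v x) (hmem : s(v, x) ∈ M ↔ w.length % 2 = 1) :
    minAltDist G M f x ≤ w.length + 1 := by
  by_cases hx : x ∈ w.support
  · calc minAltDist G M f x ≤ (w.takeUntil x hx).length := minAltDist_le_length_takeUntil hw hx
      _ ≤ w.length := by exact_mod_cast w.length_takeUntil_le_length hx
      _ ≤ w.length + 1 := le_self_add
  · simpa using minAltDist_le_length (w := w.concat hvx)
      ⟨hw.1.concat hx hvx, (alt_concat_iff hvx).mpr ⟨hw.2, hmem⟩⟩

/-- An even shortest alternating path to `a ≠ f` ends with a matched edge `s(c, a)`. -/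
lemma exists_mem_matching_minAltDist_add_one_le (ha : a ≠ f) (h : altDist G M false f a ≠ ⊤) :
    ∃ c, s(c, a) ∈ M ∧ minAltDist G M f c + 1 ≤ altDist G M false f a := by
  obtain ⟨w, ⟨hpath, halt⟩, hpar, hlen⟩ := exists_isShortestAlt h
  obtain ⟨c, p, hc, rfl⟩ := exists_eq_concat_of_ne w ha.symm
  rw [alt_concat_iff] at halt
  rw [Walk.length_concat, parityOf_eq_false_iff] at hpar
  refine ⟨c, halt.2.mpr (by omega), ?_⟩
  rw [← hlen, Walk.length_concat, Nat.cast_add, Nat.cast_one]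
  gcongr
  exact minAltDist_le_length ⟨((Walk.concat_isPath_iff hc).mp hpath).1, halt.1⟩

lemma minAltDist_add_one_le_altDist_false (hM : IsMatching G M) (ha : a ≠ f)
    (hx : s(a, x) ∈ M) : minAltDist G M f x + 1 ≤ altDist G M false f a := by
  by_cases h : altDist G M false f a = ⊤
  · rw [h]
    exact le_top
  obtain ⟨c, hc, hle⟩ := exists_mem_matching_minAltDist_add_one_le ha h
  have hcx : c = x := by
    rcases Sym2.eq_iff.mp (hM.eq_of_mem hc hx (Sym2.mem_mk_right _ _) (Sym2.mem_mk_left _ _))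
      with ⟨h₁, h₂⟩ | ⟨h₁, -⟩
    exacts [h₁.trans h₂, h₁]
  exact hcx ▸ hle

end Distances

namespace AltBaseTree

variable {T : AltBaseTree G M f} {a t v x y : V}

/-- The length `|R|` of the tree path `R` from `t` down to `v`. -/
noncomputable def depthBelow (T : AltBaseTree G M f) (t v : V) : ℕ :=
  sInf {n | T.parent^[n] v = t}

lemma depthBelow_self : T.depthBelow t t = 0 :=
  Nat.sInf_eq_zero.mpr (Or.inl rfl)

lemma iterate_parent_root (n : ℕ) : T.parent^[n] f = f :=
  Function.iterate_fixed T.parent_root n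

lemma InSubtree.parent (h : T.InSubtree a v) (hv : v ≠ a) : T.InSubtree a (T.parent v) := by
  obtain ⟨_ | n, hn⟩ := h
  · exact absurd hn hv
  · exact ⟨n, by rwa [Function.iterate_succ_apply] at hn⟩

lemma InSubtree.of_parent (h : T.InSubtree a (T.parent v)) : T.InSubtree a v :=
  let ⟨n, hn⟩ := h
  ⟨n + 1, by rwa [Function.iterate_succ_apply]⟩

lemma eq_root_of_inSubtree_root (h : T.InSubtree a f) : a = f := by
  obtain ⟨n, hn⟩ := h
  rw [← hn, iterate_parent_root]

lemma eq_parent_of_not_isOutgoing (he : s(x, y) ∈ G.edgeSet) (hout : ¬ T.IsOutgoing a s(x, y))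
    (hx : ¬ T.InSubtree a x) (hy : T.InSubtree a y) : x = T.parent a ∧ y = a := by
  have htree : T.IsTreeEdge s(x, y) := by
    by_contra h
    exact hout ⟨he, h, x, y, rfl, hx, hy⟩
  obtain ⟨w, -, hw⟩ := htree
  rcases Sym2.eq_iff.mp hw with ⟨rfl, rfl⟩ | ⟨rfl, rfl⟩
  · by_cases hya : y = a
    · exact ⟨hya ▸ rfl, hya⟩
    · exact absurd (hy.parent hya) hx
  · exact absurd hy.of_parent hx

lemma minAltDist_parent_add_one_le (hv : v ≠ f) :
    minAltDist G M f (T.parent v) + 1 ≤ minAltDist G M f v := by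
  change _ ≤ altDist G M (gam G M f v) f v
  rw [T.dist_eq v hv]
  gcongr
  exact minAltDist_le_altDist _

lemma depthBelow_add_minAltDist_le (h : T.InSubtree t v) :
    (T.depthBelow t v : ℕ∞) + minAltDist G M f t ≤ minAltDist G M f v := by
  obtain ⟨n, hn⟩ := h
  induction n generalizing v with
  | zero =>
    subst hn
    simp [depthBelow_self]
  | succ n ih =>
    rcases eq_or_ne v t with rfl | hvt
    · simp [depthBelow_self]
    have hvf : v ≠ f := by
      rintro rfl
      exact hvt (by rwa [iterate_parent_root] at hn)
    rw [Function.iterate_succ_apply] at hn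
    have hdepth : T.depthBelow t v ≤ T.depthBelow t (T.parent v) + 1 :=
      Nat.sInf_le (show T.parent^[_ + 1] v = t by
        rw [Function.iterate_succ_apply]
        exact Nat.sInf_mem (s := {n | T.parent^[n] (T.parent v) = t}) ⟨n, hn⟩)
    calc (T.depthBelow t v : ℕ∞) + minAltDist G M f t
        ≤ (T.depthBelow t (T.parent v) : ℕ∞) + minAltDist G M f t + 1 := by
          rw [add_right_comm]
          gcongr
          exact_mod_cast hdepth
      _ ≤ minAltDist G M f (T.parent v) + 1 := by gcongr; exact ih hn
      _ ≤ minAltDist G M f v := minAltDist_parent_add_one_le hvf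

lemma minAltDist_le_of_inSubtree (h : T.InSubtree a v) :
    minAltDist G M f a ≤ minAltDist G M f v :=
  le_add_self.trans (depthBelow_add_minAltDist_le h)

lemma minAltDist_add_one_le_of_inSubtree (h : T.InSubtree a v) (hv : v ≠ a) :
    minAltDist G M f a + 1 ≤ minAltDist G M f v := by
  have hdepth : 1 ≤ T.depthBelow a v := by
    by_contra! h0
    obtain ⟨n, hn⟩ := h
    have hmem : T.parent^[T.depthBelow a v] v = a :=
      Nat.sInf_mem (s := {n | T.parent^[n] v = a}) ⟨n, hn⟩
    rw [show T.depthBelow a v = 0 by omega] at hmem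
    exact hv hmem
  calc minAltDist G M f a + 1 ≤ (T.depthBelow a v : ℕ∞) + minAltDist G M f a := by
        rw [add_comm]
        gcongr
        exact_mod_cast hdepth
    _ ≤ minAltDist G M f v := depthBelow_add_minAltDist_le h

lemma exists_eq_concat_parent {P : G.Walk f a} (hP : P.IsPath) (ha : a ≠ f)
    (hban : ∀ e ∈ P.edges, ¬ T.IsOutgoing a e) :
    ∃ (Q : G.Walk f (T.parent a)) (h : G.Adj (T.parent a) a), P = Q.concat h := by
  obtain ⟨d, hd, hd₁, hd₂⟩ := P.exists_boundary_dart {x | ¬ T.InSubtree a x}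
    (fun h => ha (eq_root_of_inSubtree_root h)) (not_not.mpr ⟨0, rfl⟩)
  have hde : s(d.fst, d.snd) ∈ P.edges := List.mem_map_of_mem hd
  obtain ⟨h₁, h₂⟩ := eq_parent_of_not_isOutgoing (P.edges_subset_edgeSet hde) (hban _ hde) hd₁
    (not_not.mp hd₂)
  rw [h₁, h₂] at hde
  obtain ⟨c, Q, hc, rfl⟩ := exists_eq_concat_of_ne P ha.symm
  obtain rfl : c = T.parent a := by
    rw [Walk.edges_concat, List.concat_eq_append, List.mem_append, List.mem_singleton] at hde
    rcases hde with hQ | heq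
    · exact absurd (Q.snd_mem_support_of_mem_edges hQ) ((Walk.concat_isPath_iff hc).mp hP).2
    · rcases Sym2.eq_iff.mp heq with ⟨h, -⟩ | ⟨-, h⟩
      exacts [h.symm, absurd h.symm hc.ne]
  exact ⟨Q, hc, rfl⟩

lemma parent_edge_mem_iff {P : G.Walk f a} (hP : IsAltPath G M P) (ha : a ≠ f)
    (hban : ∀ e ∈ P.edges, ¬ T.IsOutgoing a e) :
    s(T.parent a, a) ∈ M ↔ P.length % 2 = 0 := by
  obtain ⟨Q, hQ, rfl⟩ := exists_eq_concat_parent hP.1 ha hban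
  rw [Walk.length_concat, ((alt_concat_iff hQ).mp hP.2).2]
  omega

/-- The tree edge into an odd vertex is unmatched: otherwise `a` would lie on a shortest even
path to its parent, which is shorter than `dist^{γ(a)}(a)`. -/
lemma parent_edge_not_mem_of_gam_true (hM : IsMatching G M) (hf : Unmatched M f) (ha : a ≠ f)
    (hg : gam G M f a = true) : s(T.parent a, a) ∉ M := by
  intro hpa
  have hpf : T.parent a ≠ f := by
    rintro h
    exact hf _ hpa (Sym2.mem_iff.mpr (Or.inl h.symm))
  have hle := minAltDist_add_one_le_altDist_false hM hpf hpa
  have hfin : altDist G M true f a ≠ ⊤ := by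
    unfold gam at hg
    split_ifs at hg with h
    exact ne_top_of_lt h
  have hdist := T.dist_eq a ha
  rw [hg, Bool.not_true] at hdist
  rw [minAltDist, hg, hdist] at hle
  rw [hdist] at hfin
  have hfin' : altDist G M false f (T.parent a) ≠ ⊤ := fun h => hfin (by rw [h, top_add])
  exact lt_irrefl _ ((ENat.add_one_le_iff hfin').mp (le_self_add.trans hle))

lemma length_mod_two_of_gam_true (hM : IsMatching G M) (hf : Unmatched M f) {P : G.Walk f a}
    (hP : IsAltPath G M P) (ha : a ≠ f) (hban : ∀ e ∈ P.edges, ¬ T.IsOutgoing a e)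
    (hg : gam G M f a = true) : P.length % 2 = 1 := by
  have := parent_edge_not_mem_of_gam_true (T := T) hM hf ha hg
  rw [parent_edge_mem_iff hP ha hban] at this
  omega

lemma exists_isOutgoing (hM : IsMatching G M) (hf : Unmatched M f) (ht : t ≠ f)
    {P : G.Walk f t} (hP : IsAltPath G M P) (hpar : parityOf P.length = !gam G M f t) :
    ∃ e, T.IsOutgoing t e := by
  by_contra! hno
  have hban : ∀ e ∈ P.edges, ¬ T.IsOutgoing t e := fun e _ => hno e
  cases hg : gam G M f t
  · have hfin : altDist G M false f t ≠ ⊤ := by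
      have := minAltDist_ne_top hP
      rwa [minAltDist, hg] at this
    obtain ⟨c, hcM, hc⟩ := exists_mem_matching_minAltDist_add_one_le ht hfin
    have hct : ¬ T.InSubtree t c := fun hct => by
      have := (minAltDist_add_one_le_of_inSubtree hct (hM.1 hcM).ne).trans (le_self_add.trans hc)
      rw [minAltDist, hg] at this
      exact lt_irrefl _ ((ENat.add_one_le_iff hfin).mp this)
    obtain ⟨rfl, -⟩ := eq_parent_of_not_isOutgoing (hM.1 hcM) (hno _) hct ⟨0, rfl⟩
    rw [hg, Bool.not_false, parityOf_eq_true_iff] at hpar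
    rw [parent_edge_mem_iff hP ht hban] at hcM
    omega
  · rw [hg, Bool.not_true, parityOf_eq_false_iff] at hpar
    have := length_mod_two_of_gam_true hM hf hP ht hban hg
    omega

/-- Otherwise `a` is even and `s(a, z)` is matched, so `z` precedes `a` on a shortest even path
to `a`. -/
lemma length_le_minAltDist_of_lt (hM : IsMatching G M) (hf : Unmatched M f) {z : V}
    {P : G.Walk f a} (hP : IsShortestAlt G M (rho M s(a, z)) f a P) (ha : a ≠ f)
    (hban : ∀ e ∈ P.edges, ¬ T.IsOutgoing a e) (hz : minAltDist G M f a < minAltDist G M f z) :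
    (P.length : ℕ∞) ≤ minAltDist G M f a := by
  obtain ⟨hPalt, hPpar, hPlen⟩ := hP
  suffices hpar : parityOf P.length = gam G M f a by
    rw [minAltDist, ← hpar, hPpar, hPlen]
  cases hg : gam G M f a
  · rw [parityOf_eq_false_iff]
    by_contra hodd
    have hazM : s(a, z) ∈ M := (rho_eq_parityOf_iff.mp hPpar.symm).mpr (by omega)
    have hle := minAltDist_add_one_le_altDist_false hM ha hazM
    rw [← hg] at hle
    exact lt_irrefl _ (hz.trans_le (le_self_add.trans hle))
  · exact parityOf_eq_true_iff.mpr (length_mod_two_of_gam_true hM hf hPalt ha hban hg)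

variable [DecidableEq V]

/-- Leaving `T_a` again would use the tree edge into `a` a second time. -/
lemma inSubtree_of_mem_support_dropUntil {P : G.Walk f v} (hP : P.IsPath) (ha : a ≠ f)
    (hban : ∀ e ∈ P.edges, ¬ T.IsOutgoing a e) (haP : a ∈ P.support)
    (hx : x ∈ (P.dropUntil a haP).support) : T.InSubtree a x := by
  by_contra hxa
  obtain ⟨d, hd, hd₁, hd₂⟩ := ((P.dropUntil a haP).takeUntil x hx).exists_boundary_dart
    {y | T.InSubtree a y} ⟨0, rfl⟩ hxa
  have hde : s(d.snd, d.fst) ∈ (P.dropUntil a haP).edges := by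
    rw [Sym2.eq_swap]
    exact Walk.edges_takeUntil_subset_edges _ _ (List.mem_map_of_mem hd)
  have hdP := P.edges_dropUntil_subset_edges haP hde
  obtain ⟨h₁, h₂⟩ := eq_parent_of_not_isOutgoing (P.edges_subset_edgeSet hdP) (hban _ hdP) hd₂ hd₁
  rw [h₁, h₂] at hde
  obtain ⟨Q, hQ, hQeq⟩ := exists_eq_concat_parent (hP.takeUntil haP) ha
    (fun e he => hban e (P.edges_takeUntil_subset_edges haP he))
  have hnd := hP.isTrail.edges_nodup
  rw [← P.take_spec haP, Walk.edges_append, hQeq] at hnd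
  exact List.disjoint_of_nodup_append hnd (by simp) hde

/-- The vertices of `T_a` other than `a` are farther from `f` than `a`. -/
lemma eq_of_mem_support_of_inSubtree {W : G.Walk f a} (hW : IsAltPath G M W)
    (hlen : (W.length : ℕ∞) ≤ minAltDist G M f a) (hx : x ∈ W.support)
    (hxa : T.InSubtree a x) : x = a := by
  by_contra hne
  have hle := (minAltDist_add_one_le_of_inSubtree hxa hne).trans
    ((minAltDist_le_length_takeUntil hW hx).trans
      ((by exact_mod_cast W.length_takeUntil_le_length hx : _ ≤ (W.length : ℕ∞)).trans hlen))
  exact lt_irrefl _ ((ENat.add_one_le_iff (minAltDist_ne_top hW)).mp hle)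

/-- At an odd `a` the tree edge into `a` is unmatched; at an even `a` the matched edge at `a`
leads towards `f`, so it is not the next edge of `P`, which stays in `T_a`. -/
lemma parityOf_length_takeUntil (hM : IsMatching G M) (hf : Unmatched M f) {P : G.Walk f v}
    (hP : IsAltPath G M P) (haP : a ∈ P.support) (ha : a ≠ f) (hva : v ≠ a)
    (hban : ∀ e ∈ P.edges, ¬ T.IsOutgoing a e) :
    parityOf (P.takeUntil a haP).length = gam G M f a := by
  obtain ⟨hpre, hsuf⟩ := hP.2.takeUntil_dropUntil haP
  have hpreP : IsAltPath G M (P.takeUntil a haP) := ⟨hP.1.takeUntil haP, hpre⟩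
  cases hg : gam G M f a
  · rw [parityOf_eq_false_iff]
    by_contra hodd
    obtain ⟨x, hax, R, hR⟩ := Walk.exists_eq_cons_of_ne hva.symm (P.dropUntil a haP)
    have haxM : s(a, x) ∈ M := by
      have := hsuf 0 (by simp [hR])
      simp only [hR, Walk.edges_cons, List.getElem_cons_zero, add_zero] at this
      exact this.mpr (by omega)
    have hxT : T.InSubtree a x :=
      inSubtree_of_mem_support_dropUntil hP.1 ha hban haP (by simp [hR])
    have hle := (minAltDist_add_one_le_of_inSubtree hxT hax.ne.symm).trans
      (le_self_add.trans (minAltDist_add_one_le_altDist_false hM ha haxM))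
    have hfin := minAltDist_ne_top hpreP
    rw [minAltDist, hg] at hle hfin
    exact lt_irrefl _ ((ENat.add_one_le_iff hfin).mp hle)
  · exact parityOf_eq_true_iff.mpr (length_mod_two_of_gam_true hM hf hpreP ha
      (fun e he => hban e (P.edges_takeUntil_subset_edges haP he)) hg)

/-- Otherwise a shortest alternating path to `a`, which meets `T_a` only in `a`, followed by the
part of `P` inside `T_a` would be a shorter `θ`-alternating path to `v`. -/
lemma length_takeUntil_eq_minAltDist (hM : IsMatching G M) (hf : Unmatched M f) {θ : Bool}
    {P : G.Walk f v} (hP : IsShortestAlt G M θ f v P) (haP : a ∈ P.support) (ha : a ≠ f)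
    (hva : v ≠ a) (hban : ∀ e ∈ P.edges, ¬ T.IsOutgoing a e) :
    ((P.takeUntil a haP).length : ℕ∞) = minAltDist G M f a := by
  obtain ⟨hPalt, hPpar, hPlen⟩ := hP
  have hpar := parityOf_length_takeUntil hM hf hPalt haP ha hva hban
  obtain ⟨hpre, hsuf⟩ := hPalt.2.takeUntil_dropUntil haP
  have hpreP : IsAltPath G M (P.takeUntil a haP) := ⟨hPalt.1.takeUntil haP, hpre⟩
  refine le_antisymm ?_ (minAltDist_le_length hpreP)
  obtain ⟨W, hWalt, hWpar, hWlen⟩ := exists_isShortestAlt (minAltDist_ne_top hpreP)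
  have hWmod : W.length % 2 = (P.takeUntil a haP).length % 2 :=
    parityOf_eq_parityOf_iff.mp (hWpar.trans hpar.symm)
  have hWR : IsAltPath G M (W.append (P.dropUntil a haP)) :=
    ⟨isPath_append_of_support_inter hWalt.1 (hPalt.1.dropUntil haP) fun x hxW hxR =>
        eq_of_mem_support_of_inSubtree hWalt hWlen.le hxW
          (inSubtree_of_mem_support_dropUntil hPalt.1 ha hban haP hxR),
      alt_append_iff.mpr ⟨hWalt.2, (altFrom_congr hWmod).mpr hsuf⟩⟩
  have hsplit := length_takeUntil_add_length_dropUntil P haP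
  have hWRpar : parityOf (W.append (P.dropUntil a haP)).length = θ := by
    rw [← hPpar, parityOf_eq_parityOf_iff, Walk.length_append, ← hsplit]
    omega
  have hle := altDist_le_length hWR
  rw [hWRpar, ← hPlen, Walk.length_append, Nat.cast_le] at hle
  rw [minAltDist, ← hWlen, Nat.cast_le]
  omega

lemma depthBelow_le_length_dropUntil (hM : IsMatching G M) (hf : Unmatched M f) {θ : Bool}
    {P : G.Walk f v} (hP : IsShortestAlt G M θ f v P) (htP : t ∈ P.support) (ht : t ≠ f)
    (hban : ∀ e ∈ P.edges, ¬ T.IsOutgoing t e) (hv : T.InSubtree t v) :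
    T.depthBelow t v ≤ (P.dropUntil t htP).length := by
  rcases eq_or_ne v t with rfl | hvt
  · simp [depthBelow_self]
  have hpre := length_takeUntil_eq_minAltDist hM hf hP htP ht hvt hban
  have hfin : minAltDist G M f t ≠ ⊤ := hpre ▸ ENat.natCast_ne_top _
  have hsplit := length_takeUntil_add_length_dropUntil P htP
  have key : (T.depthBelow t v : ℕ∞) + minAltDist G M f t ≤
      ((P.dropUntil t htP).length : ℕ∞) + minAltDist G M f t :=
    calc (T.depthBelow t v : ℕ∞) + minAltDist G M f t ≤ minAltDist G M f v :=
          depthBelow_add_minAltDist_le hv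
      _ ≤ altDist G M θ f v := minAltDist_le_altDist θ
      _ = P.length := hP.2.2.symm
      _ = ((P.dropUntil t htP).length : ℕ∞) + minAltDist G M f t := by
          rw [← hsplit, ← hpre, add_comm]
          push_cast
          rfl
  exact_mod_cast (ENat.add_le_add_iff_right hfin).mp key

lemma length_takeUntil_le_minAltDist (hM : IsMatching G M) (hf : Unmatched M f) {z : V}
    {P : G.Walk f v} (hP : IsShortestAlt G M (rho M s(v, z)) f v P) (haP : a ∈ P.support)
    (hban : ∀ e ∈ P.edges, ¬ T.IsOutgoing a e) (hz : minAltDist G M f a < minAltDist G M f z) :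
    ((P.takeUntil a haP).length : ℕ∞) ≤ minAltDist G M f a := by
  rcases eq_or_ne a f with rfl | ha
  · simp
  rcases eq_or_ne v a with rfl | hva
  · exact (Nat.cast_le.mpr (P.length_takeUntil_le_length haP)).trans
      (length_le_minAltDist_of_lt hM hf hP ha hban hz)
  · exact (length_takeUntil_eq_minAltDist hM hf hP haP ha hva hban).le

/-- `P` followed by `s(y, z)` reaches `z`, and `P` reaches `s` within `dist(s) < dist(t)`
steps. -/
lemma depthBelow_le_length_dropUntil_of_adj (hM : IsMatching G M) (hf : Unmatched M f)
    {s z : V} {P : G.Walk f y} (hP : IsShortestAlt G M (rho M s(y, z)) f y P)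
    (hsP : s ∈ P.support) (hban : ∀ e ∈ P.edges, ¬ T.IsOutgoing s e) (hst : T.InSubtree s t)
    (hy : ¬ T.InSubtree t y) (hz : T.InSubtree t z) (hyz : G.Adj y z) :
    T.depthBelow t z ≤ (P.dropUntil s hsP).length := by
  have hys : T.InSubtree s y := by
    rcases eq_or_ne s f with rfl | hsf
    · exact T.parent_reaches y
    · exact inSubtree_of_mem_support_dropUntil hP.1.1 hsf hban hsP (Walk.end_mem_support _)
  have hts : t ≠ s := by
    rintro rfl
    exact hy hys
  have hzP := minAltDist_le_length_add_one hP.1 hyz (rho_eq_parityOf_iff.mp hP.2.1.symm)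
  have hfin : minAltDist G M f t ≠ ⊤ :=
    ne_top_of_le_ne_top (by simp) ((minAltDist_le_of_inSubtree hz).trans hzP)
  have hst' := minAltDist_add_one_le_of_inSubtree hst hts
  have hsz : minAltDist G M f s < minAltDist G M f z :=
    ((ENat.add_one_le_iff (ne_top_of_le_ne_top hfin (le_self_add.trans hst'))).mp hst').trans_le
      (minAltDist_le_of_inSubtree hz)
  have hpre := length_takeUntil_le_minAltDist hM hf hP hsP hban hsz
  have hsplit := length_takeUntil_add_length_dropUntil P hsP
  have key : (T.depthBelow t z : ℕ∞) + minAltDist G M f t ≤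
      ((P.dropUntil s hsP).length : ℕ∞) + minAltDist G M f t :=
    calc (T.depthBelow t z : ℕ∞) + minAltDist G M f t ≤ minAltDist G M f z :=
          depthBelow_add_minAltDist_le hz
      _ ≤ P.length + 1 := hzP
      _ = (P.takeUntil s hsP).length + 1 + (P.dropUntil s hsP).length := by
          rw [← hsplit]
          push_cast
          ring
      _ ≤ minAltDist G M f s + 1 + (P.dropUntil s hsP).length := by gcongr
      _ ≤ ((P.dropUntil s hsP).length : ℕ∞) + minAltDist G M f t := by
          rw [add_comm]
          gcongr
  exact_mod_cast (ENat.add_le_add_iff_right hfin).mp key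

end AltBaseTree

lemma level_le_walkLevel {T : AltBaseTree G M f} {u v : V} {P : G.Walk u v} {e : Sym2 V}
    (he : e ∈ P.edges) : level T e ≤ walkLevel T P := by
  unfold walkLevel
  generalize P.edges = l at he ⊢
  induction l with
  | nil => simp at he
  | cons d l ih =>
    rw [List.map_cons, List.foldr_cons]
    rcases List.mem_cons.mp he with rfl | he
    exacts [le_max_left _ _, (ih he).trans (le_max_right _ _)]

lemma IsExtension.not_isOutgoing {T : AltBaseTree G M f} {out : V → Sym2 V}
    (hmoe : IsMOE T out) {θ : Bool} {s t : V} {P : G.Walk f t} (hP : IsExtension T out θ s P) :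
    ∀ e ∈ P.edges, ¬ T.IsOutgoing s e := by
  intro e he hout
  have hex : ∃ e, T.IsOutgoing s e := ⟨e, hout⟩
  have hlev := hP.2.2
  rw [outLevel, if_pos hex] at hlev
  exact lt_irrefl _ (((level_le_walkLevel he).trans_lt hlev).trans_le ((hmoe s hex).2 e hout))

end AltMatch

open AltMatch

theorem tree_path_length_bound_general
    {V : Type*} [DecidableEq V] (G : SimpleGraph V) (M : Set (Sym2 V))
    (f : V) (hM : IsMatching G M) (hf : Unmatched M f)
    (T : AltBaseTree G M f) (out : V → Sym2 V)
    (hmoe : IsMOE T out)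
    (s t yt zt : V) (hanc : T.InSubtree s t)
    (hext : ∃ P : G.Walk f t, IsExtension T out (!gam G M f t) s P)
    (hout : out t = s(yt, zt)) (hzt : T.InSubtree t zt) (hyt : ¬ T.InSubtree t yt) :
    (∀ Z : G.Walk t zt, IsExtendablePath T out (rho M (out t)) Z →
      sInf {n : ℕ | T.parent^[n] zt = t} ≤ Z.length) ∧
    (∀ Y : G.Walk s yt, IsExtendablePath T out (rho M (out t)) Y →
      sInf {n : ℕ | T.parent^[n] zt = t} ≤ Y.length) := by
  have ht : t ≠ f := by
    rintro rfl
    exact hyt (T.parent_reaches yt)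
  obtain ⟨P₀, ⟨hP₀, hpar₀, -⟩, -⟩ := hext
  have hyz : G.Adj yt zt := by
    rw [← SimpleGraph.mem_edgeSet, ← hout]
    exact (hmoe t (AltBaseTree.exists_isOutgoing hM hf ht hP₀ hpar₀)).1.1
  constructor
  · rintro Z ⟨P, htP, hP, rfl⟩
    exact AltBaseTree.depthBelow_le_length_dropUntil hM hf hP.1 htP ht (hP.not_isOutgoing hmoe) hzt
  · rintro Y ⟨P, hsP, hP, rfl⟩
    rw [hout] at hP
    exact AltBaseTree.depthBelow_le_length_dropUntil_of_adj hM hf hP.1 hsP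
      (hP.not_isOutgoing hmoe) hanc hyt hzt hyz

/-- For a `γ̄(t)`-extendable pair `(s,t)` with `out(t) = {y_t, z_t}`, `z_t ∈ T_t`,
the tree path `R` from `t` to `z_t` satisfies `|R| ≤ |Z|` for every
`ρ(t)`-extendable path `Z` from `t` to `z_t`, and `|R| ≤ |Y|` for every
`ρ(t)`-extendable path `Y` from `s` to `y_t`. -/
theorem tree_path_length_bound
    {V : Type*} [Fintype V] [DecidableEq V] (G : SimpleGraph V) (M : Set (Sym2 V))
    (f : V) (hM : IsMatching G M) (hf : Unmatched M f)
    (hreach : ∀ v : V, altDist G M true f v ≠ ⊤ ∨ altDist G M false f v ≠ ⊤)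
    (T : AltBaseTree G M f) (out : V → Sym2 V)
    (hmoe : IsMOE T out) (htie : CanonicalTie T out)
    (s t yt zt : V) (hanc : T.InSubtree s t)
    (hext : ∃ P : G.Walk f t, IsExtension T out (!gam G M f t) s P)
    (hout : out t = s(yt, zt)) (hzt : T.InSubtree t zt) (hyt : ¬ T.InSubtree t yt) :
    (∀ Z : G.Walk t zt, IsExtendablePath T out (rho M (out t)) Z →
      sInf {n : ℕ | T.parent^[n] zt = t} ≤ Z.length) ∧
    (∀ Y : G.Walk s yt, IsExtendablePath T out (rho M (out t)) Y →
      sInf {n : ℕ | T.parent^[n] zt = t} ≤ Y.length) :=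
  tree_path_length_bound_general G M f hM hf T out hmoe s t yt zt hanc hext hout hzt hyt
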